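/- arXiv:2605.17749 — 2 statements merged into one kernel-verified Lean document; each statement's English description precedes it below -/
import Mathlib

section
/- Let D be a finitely supported probability distribution on pairs (p,y) in [0,1] × {0,1}. For each positive integer m and each i in {0,...,m}, let π_i = E[w_i(p)] and q_i = E[w_i(p)·y]/π_i (when π_i > 0), where w_i(p) = max(1 - |m·p - i|, 0), and define SCDL_m(D) as the maximum over i = 0,...,m of Σ_{j≤i} π_j·max(q_j - (i+1)/m, 0) + Σ_{j>i} π_j·max(i/m - q_j, 0). Then for every positive integer m, SCDL_{2m}(D) ≥ SCDL_m(D). -/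
open Finset

/-- Triangular weight function `w_i(x) = max(1 - |m·x - i|, 0)`. -/
noncomputable def tri (m i : ℕ) (x : ℝ) : ℝ := max (1 - |(m : ℝ) * x - (i : ℝ)|) 0

/-- Bin weight `π_i = E[w_i(p)]` for a finitely supported distribution given by
a finite set `J` of atoms with probabilities `ν` and prediction map `p`. -/
noncomputable def binW {α : Type*} (m : ℕ) (J : Finset α) (ν : α → ℝ) (p : α → ℝ)
    (i : ℕ) : ℝ :=
  ∑ z ∈ J, ν z * tri m i (p z)

/-- Bin conditional mean `q_i = E[w_i(p)·y] / π_i` (zero if `π_i = 0`, by the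
convention of division by zero). -/
noncomputable def binQ {α : Type*} (m : ℕ) (J : Finset α) (ν : α → ℝ) (p y : α → ℝ)
    (i : ℕ) : ℝ :=
  (∑ z ∈ J, ν z * tri m i (p z) * y z) / binW m J ν p i

/-- Soft-binned calibration fixed decision loss at index `i`:
`Σ_{j≤i} π_j·max(q_j - (i+1)/m, 0) + Σ_{j>i} π_j·max(i/m - q_j, 0)`. -/
noncomputable def SCFDL {α : Type*} (m : ℕ) (J : Finset α) (ν : α → ℝ) (p y : α → ℝ)
    (i : ℕ) : ℝ :=
  ∑ j ∈ Finset.range (i + 1), binW m J ν p j * max (binQ m J ν p y j - ((i : ℝ) + 1) / m) 0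
    + ∑ j ∈ Finset.Icc (i + 1) m, binW m J ν p j * max ((i : ℝ) / m - binQ m J ν p y j) 0

/-- `SCDL_m(D) = max_{i=0,...,m} SCFDL_{m,i}(D)`. -/
noncomputable def SCDLm {α : Type*} (m : ℕ) (J : Finset α) (ν : α → ℝ) (p y : α → ℝ) : ℝ :=
  Finset.sup' (Finset.range (m + 1)) (Finset.nonempty_range_iff.mpr (Nat.succ_ne_zero m))
    (SCFDL m J ν p y)

/-- `SCDL(D) = inf over m ∈ {2,4,8,...} of max(SCDL_m(D), 1/m)`. -/
noncomputable def SCDL {α : Type*} (J : Finset α) (ν : α → ℝ) (p y : α → ℝ) : ℝ :=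
  ⨅ k : ℕ, max (SCDLm (2 ^ (k + 1)) J ν p y) (1 / 2 ^ (k + 1))

/-!
At scale `2m` the tents refine those at scale `m`:
`w_{j+1} = ½ w'_{2j+1} + w'_{2j+2} + ½ w'_{2j+3}`, and `w_0 = w'_0 + ½ w'_1` on `p ≥ 0`.
Hence `π_j (q_j - c) = E[w_j(p) (y - c)]` splits the same way, and convexity of `x ↦ max x 0`
bounds each coarse term `π_j max(q_j - c, 0)` by the matching combination of fine terms; likewise
for `π_j max(c - q_j, 0)`. Summing over bins bounds the coarse loss at index `i < m`, with
thresholds `(i+1)/m` and `i/m`, by fine sums with the same thresholds. The fine losses at `2i` and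
`2i + 1` each replace one of these thresholds by the midpoint `(2i+1)/(2m)`, which only increases
them, so the coarse loss is at most their average. For `i = m` the same bound, together with the
vanishing of the fine bin `2m + 1` on `p ≤ 1`, compares the coarse loss with the fine loss at `2m`.
-/

theorem max_one_sub_abs_eq_two_scale (t : ℝ) :
    max (1 - |t|) 0 =
      2⁻¹ * max (1 - |2 * t + 1|) 0 + max (1 - |2 * t|) 0 + 2⁻¹ * max (1 - |2 * t - 1|) 0 := by
  wlog ht : 0 ≤ t generalizing t
  · have := this (-t) (by linarith)
    rw [abs_neg, show 2 * -t - 1 = -(2 * t + 1) by ring, show 2 * -t + 1 = -(2 * t - 1) by ring,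
      show 2 * -t = -(2 * t) by ring, abs_neg, abs_neg, abs_neg] at this
    linarith
  rw [abs_of_nonneg ht, abs_of_nonneg (by linarith : 0 ≤ 2 * t + 1),
    abs_of_nonneg (by linarith : 0 ≤ 2 * t), max_eq_right (by linarith : 1 - (2 * t + 1) ≤ 0)]
  rcases abs_cases (2 * t - 1) with ⟨h, _⟩ | ⟨h, _⟩ <;> rw [h] <;>
    simp only [max_def] <;> split_ifs <;> linarith

theorem tri_nonneg (m i : ℕ) (x : ℝ) : 0 ≤ tri m i x := le_max_right _ _

theorem tri_succ_eq_two_scale (m j : ℕ) (x : ℝ) :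
    tri m (j + 1) x =
      2⁻¹ * tri (2 * m) (2 * j + 1) x + tri (2 * m) (2 * j + 2) x
        + 2⁻¹ * tri (2 * m) (2 * j + 3) x := by
  have := max_one_sub_abs_eq_two_scale (m * x - (j + 1))
  simp only [tri]
  push_cast
  convert this using 5 <;> ring_nf

theorem tri_zero_eq_two_scale (m : ℕ) {x : ℝ} (hx : 0 ≤ x) :
    tri m 0 x = tri (2 * m) 0 x + 2⁻¹ * tri (2 * m) 1 x := by
  have := max_one_sub_abs_eq_two_scale (m * x)
  have hmx : 0 ≤ (m : ℝ) * x := by positivity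
  rw [abs_of_nonneg (by linarith : 0 ≤ 2 * (m * x) + 1),
    max_eq_right (by linarith : 1 - (2 * (m * x) + 1) ≤ 0)] at this
  simp only [tri]
  push_cast
  convert this using 3 <;> ring_nf

theorem tri_succ_self_eq_zero (m : ℕ) {x : ℝ} (hx : x ≤ 1) : tri m (m + 1) x = 0 := by
  have : (m : ℝ) * x ≤ m := mul_le_of_le_one_right m.cast_nonneg hx
  rw [tri, max_eq_right]
  push_cast
  linarith [le_abs_self ((m : ℝ) * x - (m + 1)), neg_abs_le ((m : ℝ) * x - (m + 1))]

theorem max_half_add_add_half_le (a b c : ℝ) :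
    max (2⁻¹ * a + b + 2⁻¹ * c) 0 ≤ 2⁻¹ * max a 0 + max b 0 + 2⁻¹ * max c 0 :=
  max_le (by linarith [le_max_left a 0, le_max_left b 0, le_max_left c 0]) (by positivity)

theorem max_add_half_le (a b : ℝ) : max (a + 2⁻¹ * b) 0 ≤ max a 0 + 2⁻¹ * max b 0 :=
  max_le (by linarith [le_max_left a 0, le_max_left b 0]) (by positivity)

theorem sum_range_le_of_two_scale {f g : ℕ → ℝ} (h₀ : f 0 ≤ g 0 + 2⁻¹ * g 1)
    (h : ∀ j, f (j + 1) ≤ 2⁻¹ * g (2 * j + 1) + g (2 * j + 2) + 2⁻¹ * g (2 * j + 3)) (i : ℕ) :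
    ∑ j ∈ range (i + 1), f j ≤ ∑ k ∈ range (2 * i + 1), g k + 2⁻¹ * g (2 * i + 1) := by
  induction i with
  | zero => simpa using h₀
  | succ i ih =>
    rw [sum_range_succ f, show 2 * (i + 1) + 1 = 2 * i + 1 + 1 + 1 by ring,
      sum_range_succ g, sum_range_succ g]
    linarith [h i]

theorem sum_Icc_le_of_two_scale {f g : ℕ → ℝ}
    (h : ∀ j, f (j + 1) ≤ 2⁻¹ * g (2 * j + 1) + g (2 * j + 2) + 2⁻¹ * g (2 * j + 3))
    {i m : ℕ} (hi : i < m) :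
    ∑ j ∈ Icc (i + 1) m, f j ≤
      2⁻¹ * g (2 * i + 1) + ∑ k ∈ Icc (2 * i + 2) (2 * m), g k + 2⁻¹ * g (2 * m + 1) := by
  induction m, hi using Nat.le_induction with
  | base => simpa [show 2 * (i + 1) = 2 * i + 2 by ring] using h i
  | succ m hm ih =>
    rw [sum_Icc_succ_top (by omega), show 2 * (m + 1) = 2 * m + 1 + 1 by ring,
      sum_Icc_succ_top (by omega), sum_Icc_succ_top (by omega)]
    linarith [h m]

section Bins

variable {α : Type*} {m : ℕ} {J : Finset α} {ν p y : α → ℝ}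

noncomputable def binMoment (m : ℕ) (J : Finset α) (ν p g : α → ℝ) (i : ℕ) : ℝ :=
  ∑ z ∈ J, ν z * tri m i (p z) * g z

noncomputable def upLoss (m : ℕ) (J : Finset α) (ν p y : α → ℝ) (c : ℝ) (i : ℕ) : ℝ :=
  ∑ j ∈ range (i + 1), binW m J ν p j * max (binQ m J ν p y j - c) 0

noncomputable def downLoss (m : ℕ) (J : Finset α) (ν p y : α → ℝ) (c : ℝ) (i : ℕ) : ℝ :=
  ∑ j ∈ Icc (i + 1) m, binW m J ν p j * max (c - binQ m J ν p y j) 0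

theorem SCFDL_eq_upLoss_add_downLoss (i : ℕ) :
    SCFDL m J ν p y i = upLoss m J ν p y ((i + 1) / m) i + downLoss m J ν p y (i / m) i :=
  rfl

theorem upLoss_succ (c : ℝ) (i : ℕ) :
    upLoss m J ν p y c (i + 1) =
      upLoss m J ν p y c i + binW m J ν p (i + 1) * max (binQ m J ν p y (i + 1) - c) 0 :=
  sum_range_succ _ _

theorem downLoss_eq_add_downLoss_succ (c : ℝ) {i : ℕ} (hi : i < m) :
    downLoss m J ν p y c i =
      binW m J ν p (i + 1) * max (c - binQ m J ν p y (i + 1)) 0 + downLoss m J ν p y c (i + 1) := by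
  rw [downLoss, Icc_eq_cons_Ioc (by omega), sum_cons, ← Icc_add_one_left_eq_Ioc, downLoss]

theorem downLoss_self (c : ℝ) : downLoss m J ν p y c m = 0 := by
  simp [downLoss]

theorem binW_nonneg (hν : ∀ z ∈ J, 0 ≤ ν z) (i : ℕ) : 0 ≤ binW m J ν p i :=
  sum_nonneg fun z hz => mul_nonneg (hν z hz) (tri_nonneg _ _ _)

theorem binMoment_eq_zero_of_binW_eq_zero (hν : ∀ z ∈ J, 0 ≤ ν z) {i : ℕ}
    (h : binW m J ν p i = 0) (g : α → ℝ) : binMoment m J ν p g i = 0 := by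
  rw [binW, sum_eq_zero_iff_of_nonneg fun z hz => mul_nonneg (hν z hz) (tri_nonneg _ _ _)] at h
  exact sum_eq_zero fun z hz => by rw [h z hz, zero_mul]

theorem binW_mul_max_binQ_sub (hν : ∀ z ∈ J, 0 ≤ ν z) (c : ℝ) (j : ℕ) :
    binW m J ν p j * max (binQ m J ν p y j - c) 0 =
      max (binMoment m J ν p (fun z => y z - c) j) 0 := by
  rcases (binW_nonneg hν j).eq_or_lt with h | h
  · rw [← h, binMoment_eq_zero_of_binW_eq_zero hν h.symm, zero_mul, max_self]
  · rw [mul_max_of_nonneg _ _ h.le, mul_zero, binQ, mul_sub, mul_div_cancel₀ _ h.ne']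
    simp only [binMoment, binW, mul_sub, sum_sub_distrib, sum_mul]

theorem binW_mul_max_sub_binQ (hν : ∀ z ∈ J, 0 ≤ ν z) (c : ℝ) (j : ℕ) :
    binW m J ν p j * max (c - binQ m J ν p y j) 0 =
      max (binMoment m J ν p (fun z => c - y z) j) 0 := by
  rcases (binW_nonneg hν j).eq_or_lt with h | h
  · rw [← h, binMoment_eq_zero_of_binW_eq_zero hν h.symm, zero_mul, max_self]
  · rw [mul_max_of_nonneg _ _ h.le, mul_zero, binQ, mul_sub, mul_div_cancel₀ _ h.ne']
    simp only [binMoment, binW, mul_sub, sum_sub_distrib, sum_mul]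

theorem binMoment_succ_eq_two_scale (g : α → ℝ) (j : ℕ) :
    binMoment m J ν p g (j + 1) =
      2⁻¹ * binMoment (2 * m) J ν p g (2 * j + 1) + binMoment (2 * m) J ν p g (2 * j + 2)
        + 2⁻¹ * binMoment (2 * m) J ν p g (2 * j + 3) := by
  simp only [binMoment, mul_sum, ← sum_add_distrib]
  refine sum_congr rfl fun z _ => ?_
  rw [tri_succ_eq_two_scale]
  ring

theorem binMoment_zero_eq_two_scale (hp : ∀ z ∈ J, 0 ≤ p z) (g : α → ℝ) :
    binMoment m J ν p g 0 =
      binMoment (2 * m) J ν p g 0 + 2⁻¹ * binMoment (2 * m) J ν p g 1 := by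
  simp only [binMoment, mul_sum, ← sum_add_distrib]
  refine sum_congr rfl fun z hz => ?_
  rw [tri_zero_eq_two_scale m (hp z hz)]
  ring

theorem binW_succ_self_eq_zero (hp : ∀ z ∈ J, p z ≤ 1) : binW m J ν p (m + 1) = 0 :=
  sum_eq_zero fun z hz => by rw [tri_succ_self_eq_zero m (hp z hz), mul_zero]

theorem max_binMoment_succ_le (g : α → ℝ) (j : ℕ) :
    max (binMoment m J ν p g (j + 1)) 0 ≤
      2⁻¹ * max (binMoment (2 * m) J ν p g (2 * j + 1)) 0
        + max (binMoment (2 * m) J ν p g (2 * j + 2)) 0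
        + 2⁻¹ * max (binMoment (2 * m) J ν p g (2 * j + 3)) 0 := by
  rw [binMoment_succ_eq_two_scale]
  exact max_half_add_add_half_le _ _ _

theorem max_binMoment_zero_le (hp : ∀ z ∈ J, 0 ≤ p z) (g : α → ℝ) :
    max (binMoment m J ν p g 0) 0 ≤
      max (binMoment (2 * m) J ν p g 0) 0 + 2⁻¹ * max (binMoment (2 * m) J ν p g 1) 0 := by
  rw [binMoment_zero_eq_two_scale hp]
  exact max_add_half_le _ _

theorem upLoss_le_two_mul (hν : ∀ z ∈ J, 0 ≤ ν z) (hp : ∀ z ∈ J, 0 ≤ p z) (c : ℝ) (i : ℕ) :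
    upLoss m J ν p y c i ≤
      upLoss (2 * m) J ν p y c (2 * i)
        + 2⁻¹ * (binW (2 * m) J ν p (2 * i + 1) *
          max (binQ (2 * m) J ν p y (2 * i + 1) - c) 0) := by
  simp only [upLoss, binW_mul_max_binQ_sub hν]
  exact sum_range_le_of_two_scale (max_binMoment_zero_le hp _) (max_binMoment_succ_le _) i

theorem downLoss_le_two_mul (hν : ∀ z ∈ J, 0 ≤ ν z) (hp : ∀ z ∈ J, p z ≤ 1) (c : ℝ) {i : ℕ}
    (hi : i < m) :
    downLoss m J ν p y c i ≤
      2⁻¹ * (binW (2 * m) J ν p (2 * i + 1) * max (c - binQ (2 * m) J ν p y (2 * i + 1)) 0)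
        + downLoss (2 * m) J ν p y c (2 * i + 1) := by
  have htop : binW (2 * m) J ν p (2 * m + 1) = 0 := binW_succ_self_eq_zero hp
  simp only [downLoss, binW_mul_max_sub_binQ hν]
  refine (sum_Icc_le_of_two_scale
    (g := fun k => max (binMoment (2 * m) J ν p (fun z => c - y z) k) 0)
    (max_binMoment_succ_le _) hi).trans_eq ?_
  rw [binMoment_eq_zero_of_binW_eq_zero hν htop, max_self, mul_zero, add_zero]

theorem upLoss_antitone (hν : ∀ z ∈ J, 0 ≤ ν z) {c c' : ℝ} (h : c ≤ c') (i : ℕ) :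
    upLoss m J ν p y c' i ≤ upLoss m J ν p y c i :=
  sum_le_sum fun j _ => mul_le_mul_of_nonneg_left (by gcongr) (binW_nonneg hν j)

theorem downLoss_monotone (hν : ∀ z ∈ J, 0 ≤ ν z) {c c' : ℝ} (h : c ≤ c') (i : ℕ) :
    downLoss m J ν p y c i ≤ downLoss m J ν p y c' i :=
  sum_le_sum fun j _ => mul_le_mul_of_nonneg_left (by gcongr) (binW_nonneg hν j)

theorem SCFDL_le_add_div_two (hν : ∀ z ∈ J, 0 ≤ ν z) (hp₀ : ∀ z ∈ J, 0 ≤ p z)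
    (hp₁ : ∀ z ∈ J, p z ≤ 1) {i : ℕ} (hi : i < m) :
    SCFDL m J ν p y i ≤
      (SCFDL (2 * m) J ν p y (2 * i) + SCFDL (2 * m) J ν p y (2 * i + 1)) / 2 := by
  have hm : (0 : ℝ) < m := by exact_mod_cast i.zero_le.trans_lt hi
  set c : ℝ := (2 * i + 1) / (2 * m)
  have hc₀ : (i : ℝ) / m ≤ c := by rw [div_le_div_iff₀ hm (by positivity)]; linarith
  have hc₁ : c ≤ (i + 1) / m := by rw [div_le_div_iff₀ (by positivity) hm]; linarith
  have e₀ : ((2 * i : ℕ) : ℝ) / (2 * m : ℕ) = i / m := by push_cast; ring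
  have e₁ : (((2 * i + 1 : ℕ) : ℝ) + 1) / (2 * m : ℕ) = (i + 1) / m := by push_cast; ring
  have e₂ : (((2 * i : ℕ) : ℝ) + 1) / (2 * m : ℕ) = c := by push_cast; ring
  have e₃ : ((2 * i + 1 : ℕ) : ℝ) / (2 * m : ℕ) = c := by push_cast; ring
  rw [SCFDL_eq_upLoss_add_downLoss, SCFDL_eq_upLoss_add_downLoss, SCFDL_eq_upLoss_add_downLoss,
    e₀, e₁, e₂, e₃, upLoss_succ, downLoss_eq_add_downLoss_succ _ (by omega : 2 * i < 2 * m)]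
  linarith [upLoss_le_two_mul (m := m) (y := y) hν hp₀ ((i + 1) / m) i,
    downLoss_le_two_mul (y := y) hν hp₁ (i / m) hi,
    upLoss_antitone (m := 2 * m) (p := p) (y := y) hν hc₁ (2 * i),
    downLoss_monotone (m := 2 * m) (p := p) (y := y) hν hc₀ (2 * i + 1)]

theorem SCFDL_self_le_two_mul (hν : ∀ z ∈ J, 0 ≤ ν z) (hp₀ : ∀ z ∈ J, 0 ≤ p z)
    (hp₁ : ∀ z ∈ J, p z ≤ 1) : SCFDL m J ν p y m ≤ SCFDL (2 * m) J ν p y (2 * m) := by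
  have hc : (((2 * m : ℕ) : ℝ) + 1) / (2 * m : ℕ) ≤ (m + 1) / m := by
    push_cast
    rw [show ((m : ℝ) + 1) / m = (2 * m + 2) / (2 * m) by ring]
    gcongr
    linarith
  rw [SCFDL_eq_upLoss_add_downLoss, SCFDL_eq_upLoss_add_downLoss, downLoss_self, downLoss_self]
  have := upLoss_le_two_mul (m := m) (y := y) hν hp₀ ((m + 1) / m) m
  rw [binW_succ_self_eq_zero hp₁, zero_mul, mul_zero, add_zero] at this
  linarith [upLoss_antitone (m := 2 * m) (p := p) (y := y) hν hc (2 * m)]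

end Bins

theorem SCDLm_le_SCDLm_two_mul_general (m : ℕ)
    (S : Finset (ℝ × ℝ)) (μ : ℝ × ℝ → ℝ)
    (hμ : ∀ z ∈ S, 0 ≤ μ z)
    (hsupp : ∀ z ∈ S, z.1 ∈ Set.Icc (0:ℝ) 1 ∧ (z.2 = 0 ∨ z.2 = 1)) :
    SCDLm m S μ Prod.fst Prod.snd ≤ SCDLm (2 * m) S μ Prod.fst Prod.snd := by
  have hp₀ : ∀ z ∈ S, 0 ≤ z.1 := fun z hz => (hsupp z hz).1.1
  have hp₁ : ∀ z ∈ S, z.1 ≤ 1 := fun z hz => (hsupp z hz).1.2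
  have le_fine {k : ℕ} (hk : k ≤ 2 * m) :
      SCFDL (2 * m) S μ Prod.fst Prod.snd k ≤ SCDLm (2 * m) S μ Prod.fst Prod.snd :=
    le_sup' _ (mem_range.2 (by omega))
  refine sup'_le _ _ fun i hi => ?_
  obtain hi | rfl : i < m ∨ i = m := by rw [mem_range] at hi; omega
  · linarith [SCFDL_le_add_div_two (y := Prod.snd) hμ hp₀ hp₁ hi, le_fine (k := 2 * i) (by omega),
      le_fine (k := 2 * i + 1) (by omega)]
  · exact (SCFDL_self_le_two_mul hμ hp₀ hp₁).trans (le_fine le_rfl)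

/-- for a finitely supported probability distribution `D` on
`[0,1] × {0,1}` and every positive integer `m`, `SCDL_{2m}(D) ≥ SCDL_m(D)`. -/
theorem SCDLm_le_SCDLm_two_mul (m : ℕ) (hm : 0 < m)
    (S : Finset (ℝ × ℝ)) (μ : ℝ × ℝ → ℝ)
    (hμ : ∀ z ∈ S, 0 ≤ μ z) (hsum : ∑ z ∈ S, μ z = 1)
    (hsupp : ∀ z ∈ S, z.1 ∈ Set.Icc (0:ℝ) 1 ∧ (z.2 = 0 ∨ z.2 = 1)) :
    SCDLm m S μ Prod.fst Prod.snd ≤ SCDLm (2 * m) S μ Prod.fst Prod.snd :=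
  SCDLm_le_SCDLm_two_mul_general m S μ hμ hsupp
end

section
/- Any calibration measure CAL_T that is (1) actionable — for every decision task Z with utility in [0,1] and every α ≥ 0 there is a randomized response function r_{Z,α} (independent of the distribution) such that CAL_T(D) ≤ α implies SR_Z(r_{Z,α}, D) ≤ α — and (2) ε(T)-testable for calibrated distributions — E[CAL_T(S_T)] ≤ ε(T) for the empirical distribution S_T of T i.i.d. samples from any calibrated D — must satisfy ε(T) ≥ c·T^{-1/2} for an absolute constant c > 0. -/
open scoped Classical


def IsDist (D : (ℝ × ℝ) →₀ ℝ) : Prop :=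
  (∀ z, 0 ≤ D z) ∧ (∑ z ∈ D.support, D z = 1) ∧
    ∀ z ∈ D.support, z.1 ∈ Set.Icc (0:ℝ) 1 ∧ (z.2 = 0 ∨ z.2 = 1)

def CalibratedD (D : (ℝ × ℝ) →₀ ℝ) : Prop :=
  ∀ v : ℝ, (∑ z ∈ D.support, if z.1 = v then D z * z.2 else 0)
      = v * ∑ z ∈ D.support, if z.1 = v then D z else 0

noncomputable def SRD (n : ℕ) (U : Fin n → ℝ → ℝ) (r : ℝ → Fin n → ℝ)
    (D : (ℝ × ℝ) →₀ ℝ) : ℝ :=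
  ⨆ σ : Fin n → Fin n,
    ∑ z ∈ D.support, D z * ∑ a : Fin n, r z.1 a * (U (σ a) z.2 - U a z.2)

noncomputable def empDist (T : ℕ) (f : Fin T → ℝ × ℝ) : (ℝ × ℝ) →₀ ℝ :=
  ∑ t : Fin T, Finsupp.single (f t) ((T : ℝ)⁻¹)

noncomputable def expectedCAL (T : ℕ) (CAL : ((ℝ × ℝ) →₀ ℝ) → ℝ)
    (D : (ℝ × ℝ) →₀ ℝ) : ℝ :=
  ∑ f : Fin T → {z : ℝ × ℝ // z ∈ D.support},
    (∏ t : Fin T, D (f t)) * CAL (empDist T (fun t => (f t : ℝ × ℝ)))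


/-!
The hard instance is the calibrated distribution that always predicts `1/2` for a fair coin `y`.
On `T` samples its empirical distribution has bias `S / T`, where `S` is a sum of `T` independent
signs. Since `E S² = T` and `E S⁴ ≤ 3 T²`, the Paley–Zygmund inequality for `S²` together with the
symmetry `S ↦ -S` gives `S ≥ √T / 2` and `S ≤ -√T / 2` each with probability at least `3/32`.
For the task of guessing `y`, the response `r` that actionability provides at level
`α = 1 / (8 √T)` puts weight at least `1/2` on one action at `p = 1/2`; on the tail where the
sample favours the other action its swap regret is at least `1 / (4 √T) > α`, so `CAL > α` there.
Hence `ε ≥ E[CAL] ≥ (3/32) α`.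
-/

open Finset

-- The Paley–Zygmund inequality for `X ^ 2` under the uniform measure, in counting form.
lemma sq_sub_le_card_filter_mul_sum_pow_four {γ : Type*} [Fintype γ] (X : γ → ℝ) {t : ℝ}
    (ht : 0 ≤ t) (hX : Fintype.card γ * t ≤ ∑ x, X x ^ 2) :
    (∑ x, X x ^ 2 - Fintype.card γ * t) ^ 2 ≤ #{x | t ≤ X x ^ 2} * ∑ x, X x ^ 4 := by
  set B : Finset γ := {x | t ≤ X x ^ 2}
  have hsmall : ∑ x ∈ univ.filter (fun x => ¬ t ≤ X x ^ 2), X x ^ 2 ≤ Fintype.card γ * t :=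
    calc _ ≤ ∑ x ∈ univ.filter (fun x => ¬ t ≤ X x ^ 2), t :=
          sum_le_sum fun x hx => (not_le.1 (mem_filter.1 hx).2).le
      _ ≤ _ := by
          rw [sum_const, nsmul_eq_mul]
          gcongr
          exact_mod_cast card_le_univ _
  have hbig : ∑ x, X x ^ 2 - Fintype.card γ * t ≤ ∑ x ∈ B, X x ^ 2 := by
    linarith [sum_filter_add_sum_filter_not univ (fun x => t ≤ X x ^ 2) (fun x => X x ^ 2)]
  calc _ ≤ (∑ x ∈ B, X x ^ 2) ^ 2 := pow_le_pow_left₀ (sub_nonneg.2 hX) hbig 2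
    _ ≤ #B * ∑ x ∈ B, (X x ^ 2) ^ 2 := sq_sum_le_card_mul_sum_sq
    _ ≤ #B * ∑ x, X x ^ 4 := by
        simp only [← pow_mul]
        gcongr
        · exact fun x _ _ => by rw [pow_mul]; positivity
        · exact subset_univ _

section SignSums

variable {β : Type*} [Fintype β] (ρ : β → ℝ)

def signSum {T : ℕ} (f : Fin T → β) : ℝ := ∑ t, ρ (f t)

lemma sum_signSum_succ (T : ℕ) (F : ℝ → ℝ) :
    ∑ f : Fin (T + 1) → β, F (signSum ρ f) = ∑ f : Fin T → β, ∑ b, F (ρ b + signSum ρ f) := by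
  rw [← (Fin.consEquiv fun _ => β).sum_comp, Fintype.sum_prod_type, sum_comm]
  simp [signSum, Fin.sum_univ_succ, Fin.consEquiv]

variable {ρ}

section Moments

variable (hρ : ∀ b, ρ b ^ 2 = 1) (hsum : ∑ b, ρ b = 0)
include hρ hsum

lemma sum_sign_add_sq (x : ℝ) : ∑ b, (ρ b + x) ^ 2 = Fintype.card β * (x ^ 2 + 1) := by
  have h (b : β) : (ρ b + x) ^ 2 = (x ^ 2 + 1) + ρ b * (2 * x) := by
    linear_combination hρ b
  rw [sum_congr rfl fun b _ => h b, sum_add_distrib, ← sum_mul, hsum, zero_mul, add_zero,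
    sum_const, card_univ, nsmul_eq_mul]

lemma sum_sign_add_pow_four (x : ℝ) :
    ∑ b, (ρ b + x) ^ 4 = Fintype.card β * (x ^ 4 + 6 * x ^ 2 + 1) := by
  have h (b : β) : (ρ b + x) ^ 4 = (x ^ 4 + 6 * x ^ 2 + 1) + ρ b * (4 * x + 4 * x ^ 3) := by
    linear_combination (ρ b ^ 2 + 1 + 4 * ρ b * x + 6 * x ^ 2) * hρ b
  rw [sum_congr rfl fun b _ => h b, sum_add_distrib, ← sum_mul, hsum, zero_mul, add_zero,
    sum_const, card_univ, nsmul_eq_mul]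

lemma sum_signSum_sq (T : ℕ) :
    ∑ f : Fin T → β, signSum ρ f ^ 2 = T * Fintype.card β ^ T := by
  induction T with
  | zero => simp [signSum]
  | succ T ih =>
    rw [sum_signSum_succ ρ T (· ^ 2)]
    simp only [sum_sign_add_sq hρ hsum, ← mul_sum, sum_add_distrib, ih]
    simp only [sum_const, card_univ, Fintype.card_pi, prod_const, Fintype.card_fin, nsmul_eq_mul]
    push_cast
    ring

lemma sum_signSum_pow_four (T : ℕ) :
    ∑ f : Fin T → β, signSum ρ f ^ 4 = (3 * T ^ 2 - 2 * T) * Fintype.card β ^ T := by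
  induction T with
  | zero => simp [signSum]
  | succ T ih =>
    rw [sum_signSum_succ ρ T (· ^ 4)]
    simp only [sum_sign_add_pow_four hρ hsum, ← mul_sum, sum_add_distrib, ih,
      sum_signSum_sq hρ hsum]
    simp only [sum_const, card_univ, Fintype.card_pi, prod_const, Fintype.card_fin, nsmul_eq_mul]
    push_cast
    ring

lemma card_pow_le_card_signSum_sq_ge {T : ℕ} (hT : 0 < T) :
    3 * (Fintype.card β : ℝ) ^ T ≤ 16 * #{f : Fin T → β | T / 4 ≤ signSum ρ f ^ 2} := by
  have hT' : (0 : ℝ) < T := by exact_mod_cast hT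
  have hN : (0 : ℝ) ≤ Fintype.card β ^ T := by positivity
  have hPZ := sq_sub_le_card_filter_mul_sum_pow_four (signSum ρ) (t := T / 4) (by positivity)
    (by rw [sum_signSum_sq hρ hsum T, Fintype.card_fun, Fintype.card_fin]; push_cast; nlinarith)
  simp only [sum_signSum_sq hρ hsum T, sum_signSum_pow_four hρ hsum T, Fintype.card_fun,
    Fintype.card_fin, Nat.cast_pow] at hPZ
  set N : ℝ := Fintype.card β ^ T
  set B : ℝ := ↑(#{f : Fin T → β | T / 4 ≤ signSum ρ f ^ 2})
  have hB : 0 ≤ B := by positivity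
  rcases hN.eq_or_lt with hN | hN
  · rw [← hN]; linarith
  have : T ^ 2 * N * (9 * N) ≤ T ^ 2 * N * (48 * B) := by
    nlinarith [mul_nonneg (mul_nonneg hB hT'.le) hN.le]
  linarith [le_of_mul_le_mul_left this (by positivity)]

end Moments

lemma card_pow_le_card_signSum_ge (ι : β ≃ β) (hι : ∀ b, ρ (ι b) = -ρ b)
    (hρ : ∀ b, ρ b ^ 2 = 1) {T : ℕ} (hT : 0 < T) :
    3 * (Fintype.card β : ℝ) ^ T ≤ 32 * #{f : Fin T → β | √T ≤ 2 * signSum ρ f} := by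
  have hsum : ∑ b, ρ b = 0 := by
    have := ι.sum_comp ρ
    simp only [hι, sum_neg_distrib] at this
    linarith
  set upper : Finset (Fin T → β) := {f | √T ≤ 2 * signSum ρ f}
  set lower : Finset (Fin T → β) := {f | √T ≤ -(2 * signSum ρ f)}
  let flip : (Fin T → β) ≃ (Fin T → β) := Equiv.piCongrRight fun _ => ι
  have hflip (f : Fin T → β) : signSum ρ (flip f) = -signSum ρ f := by
    simp [flip, signSum, hι]
  have hsymm : #upper = #lower := card_equiv flip fun f => by simp [upper, lower, hflip]
  have hcover : ({f | T / 4 ≤ signSum ρ f ^ 2} : Finset (Fin T → β)) ⊆ upper ∪ lower := by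
    intro f hf
    simp only [upper, lower, mem_filter, mem_univ, true_and, mem_union] at hf ⊢
    have : √T ≤ |2 * signSum ρ f| := by
      rw [← Real.sqrt_sq_eq_abs]
      exact Real.sqrt_le_sqrt (by linarith)
    rcases le_abs'.1 this with h | h
    · exact Or.inr (by linarith)
    · exact Or.inl h
  have hcard : (#{f : Fin T → β | T / 4 ≤ signSum ρ f ^ 2} : ℝ) ≤ 2 * #upper := by
    have := (card_le_card hcover).trans (card_union_le _ _)
    exact_mod_cast (show _ ≤ 2 * #upper by omega)
  linarith [card_pow_le_card_signSum_sq_ge hρ hsum hT (β := β)]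

end SignSums

section EmpiricalDistribution

variable {T : ℕ} (f : Fin T → ℝ × ℝ)

lemma sum_support_empDist_mul (g : ℝ × ℝ → ℝ) :
    ∑ z ∈ (empDist T f).support, empDist T f z * g z = (T : ℝ)⁻¹ * ∑ t, g (f t) := by
  change (empDist T f).sum (fun z v => v * g z) = _
  rw [empDist, ← Finsupp.sum_finsetSum_index (fun _ => zero_mul _) (fun _ _ _ => add_mul _ _ _),
    mul_sum]
  exact sum_congr rfl fun t _ => Finsupp.sum_single_index (zero_mul _)

lemma exists_eq_of_mem_support_empDist {z : ℝ × ℝ} (hz : z ∈ (empDist T f).support) :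
    ∃ t, f t = z := by
  obtain ⟨t, -, ht⟩ := Finsupp.mem_support_finsetSum z hz
  exact ⟨t, (mem_singleton.1 (Finsupp.support_single_subset ht)).symm⟩

lemma isDist_empDist (hT : 0 < T)
    (hf : ∀ t, (f t).1 ∈ Set.Icc (0 : ℝ) 1 ∧ ((f t).2 = 0 ∨ (f t).2 = 1)) :
    IsDist (empDist T f) := by
  refine ⟨fun z => ?_, ?_, fun z hz => ?_⟩
  · rw [empDist, Finsupp.finsetSum_apply]
    exact sum_nonneg fun t _ => by rw [Finsupp.single_apply]; split_ifs <;> positivity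
  · simpa [hT.ne'] using sum_support_empDist_mul f 1
  · obtain ⟨t, rfl⟩ := exists_eq_of_mem_support_empDist f hz
    exact hf t

lemma isDist_empDist_of_isDist (hT : 0 < T) {D : (ℝ × ℝ) →₀ ℝ} (hD : IsDist D)
    (f : Fin T → D.support) : IsDist (empDist T fun t => f t) :=
  isDist_empDist _ hT fun t => hD.2.2 _ (f t).2

end EmpiricalDistribution

lemma le_SRD {n : ℕ} (U : Fin n → ℝ → ℝ) (r : ℝ → Fin n → ℝ) (D : (ℝ × ℝ) →₀ ℝ)
    (σ : Fin n → Fin n) :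
    ∑ z ∈ D.support, D z * ∑ a, r z.1 a * (U (σ a) z.2 - U a z.2) ≤ SRD n U r D :=
  le_ciSup (f := fun σ : Fin n → Fin n =>
      ∑ z ∈ D.support, D z * ∑ a, r z.1 a * (U (σ a) z.2 - U a z.2))
    (Set.finite_range _).bddAbove σ

section GuessingTask

def guessUtility : Fin 2 → ℝ → ℝ := fun a y => if a = 0 then 1 - y else y

-- In `Fin 2`, `a + 1` is the action other than `a`.
def guessGain (a : Fin 2) (y : ℝ) : ℝ := guessUtility a y - guessUtility (a + 1) y

lemma guessUtility_mem (a : Fin 2) (y : ℝ) (hy : y = 0 ∨ y = 1) :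
    guessUtility a y ∈ Set.Icc (0 : ℝ) 1 := by
  rcases hy with rfl | rfl <;> fin_cases a <;> simp [guessUtility]

lemma guessGain_sq (a : Fin 2) {y : ℝ} (hy : y = 0 ∨ y = 1) : guessGain a y ^ 2 = 1 := by
  rcases hy with rfl | rfl <;> fin_cases a <;>
    norm_num [guessGain, guessUtility, show (1 : Fin 2) + 1 = 0 from rfl]

lemma guessGain_one_sub (a : Fin 2) (y : ℝ) : guessGain a (1 - y) = -guessGain a y := by
  fin_cases a <;> simp [guessGain, guessUtility, show (1 : Fin 2) + 1 = 0 from rfl]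

lemma exists_half_le_add_one {w : Fin 2 → ℝ} (hw : ∑ a, w a = 1) : ∃ a, 1 / 2 ≤ w (a + 1) := by
  rw [Fin.sum_univ_two] at hw
  by_cases h : 1 / 2 ≤ w 1
  · exact ⟨0, by simpa using h⟩
  · exact ⟨1, by rw [show (1 : Fin 2) + 1 = 0 from rfl]; linarith⟩

lemma mul_guessGain_le_SRD_empDist {T : ℕ} (f : Fin T → ℝ × ℝ) (hf : ∀ t, (f t).1 = 1 / 2)
    (r : ℝ → Fin 2 → ℝ) (a : Fin 2) :
    r (1 / 2) (a + 1) * ((T : ℝ)⁻¹ * ∑ t, guessGain a (f t).2) ≤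
      SRD 2 guessUtility r (empDist T f) := by
  refine le_trans (le_of_eq ?_) (le_SRD guessUtility r (empDist T f) fun _ => a)
  rw [sum_support_empDist_mul f, mul_left_comm, mul_sum]
  congr 1
  refine sum_congr rfl fun t _ => ?_
  rw [hf t]
  fin_cases a <;>
    simp [Fin.sum_univ_two, guessGain, guessUtility, show (1 : Fin 2) + 1 = 0 from rfl]

lemma inv_four_sqrt_le_SRD_empDist {T : ℕ} (hT : 0 < T) (f : Fin T → ℝ × ℝ)
    (hf : ∀ t, (f t).1 = 1 / 2) (r : ℝ → Fin 2 → ℝ) (a : Fin 2) (ha : 1 / 2 ≤ r (1 / 2) (a + 1))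
    (htail : √T ≤ 2 * ∑ t, guessGain a (f t).2) :
    1 / (4 * √T) ≤ SRD 2 guessUtility r (empDist T f) := by
  have hT' : (0 : ℝ) < T := by exact_mod_cast hT
  calc 1 / (4 * √T) = 1 / 2 * ((T : ℝ)⁻¹ * (√T / 2)) := by
        field_simp
        rw [Real.sq_sqrt hT'.le]
        ring
    _ ≤ r (1 / 2) (a + 1) * ((T : ℝ)⁻¹ * ∑ t, guessGain a (f t).2) := by
        gcongr
        linarith
    _ ≤ SRD 2 guessUtility r (empDist T f) := mul_guessGain_le_SRD_empDist f hf r a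

end GuessingTask

section HalfCoin

noncomputable def halfCoin : (ℝ × ℝ) →₀ ℝ :=
  Finsupp.single (1 / 2, 0) (1 / 2) + Finsupp.single (1 / 2, 1) (1 / 2)

lemma support_halfCoin : halfCoin.support = {(1 / 2, 0), (1 / 2, 1)} := by
  rw [halfCoin, Finsupp.support_add_eq] <;> simp

lemma mem_support_halfCoin {z : ℝ × ℝ} :
    z ∈ halfCoin.support ↔ z.1 = 1 / 2 ∧ (z.2 = 0 ∨ z.2 = 1) := by
  obtain ⟨p, y⟩ := z
  simp [support_halfCoin, Prod.ext_iff, and_or_left]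

lemma card_support_halfCoin : #halfCoin.support = 2 := by
  rw [support_halfCoin, card_pair (by norm_num)]

lemma halfCoin_apply_of_mem {z : ℝ × ℝ} (hz : z ∈ halfCoin.support) : halfCoin z = 1 / 2 := by
  obtain ⟨p, y⟩ := z
  obtain ⟨rfl, rfl | rfl⟩ := mem_support_halfCoin.1 hz <;> simp [halfCoin]

lemma isDist_halfCoin : IsDist halfCoin := by
  refine ⟨fun z => ?_, ?_, fun z hz => ?_⟩
  · simp only [halfCoin, Finsupp.add_apply, Finsupp.single_apply]
    split_ifs <;> norm_num
  · rw [sum_congr rfl fun z hz => halfCoin_apply_of_mem hz, sum_const, card_support_halfCoin]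
    norm_num
  · obtain ⟨hp, hy⟩ := mem_support_halfCoin.1 hz
    exact ⟨by rw [hp]; norm_num, hy⟩

lemma calibratedD_halfCoin : CalibratedD halfCoin := by
  intro v
  have h₀ : halfCoin (1 / 2, 0) = 1 / 2 := halfCoin_apply_of_mem (mem_support_halfCoin.2 (by simp))
  have h₁ : halfCoin (1 / 2, 1) = 1 / 2 := halfCoin_apply_of_mem (mem_support_halfCoin.2 (by simp))
  rw [support_halfCoin, sum_pair (by simp), sum_pair (by simp)]
  split_ifs with hv
  · rw [h₀, h₁, ← hv]; norm_num
  · simp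

def halfCoinFlip : halfCoin.support ≃ halfCoin.support :=
  Function.Involutive.toPerm
    (fun z => ⟨(z.1.1, 1 - z.1.2), by
      obtain ⟨hp, hy⟩ := mem_support_halfCoin.1 z.2
      exact mem_support_halfCoin.2 ⟨hp, by rcases hy with h | h <;> simp [h]⟩⟩)
    fun z => by simp

lemma three_div_le_card_signSum_guessGain_ge {T : ℕ} (hT : 0 < T) (a : Fin 2) :
    3 / 32 ≤ (1 / 2) ^ T *
      (#{f : Fin T → halfCoin.support | √T ≤ 2 * signSum (fun z => guessGain a z.1.2) f} : ℝ) := by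
  have h := card_pow_le_card_signSum_ge halfCoinFlip (fun z => guessGain_one_sub a z.1.2)
    (fun z => guessGain_sq a (mem_support_halfCoin.1 z.2).2) hT
  rw [Fintype.card_coe, card_support_halfCoin, Nat.cast_ofNat] at h
  rw [one_div, inv_pow, inv_mul_eq_div, le_div_iff₀ (by positivity)]
  linarith

lemma expectedCAL_halfCoin (T : ℕ) (CAL : ((ℝ × ℝ) →₀ ℝ) → ℝ) :
    expectedCAL T CAL halfCoin =
      (1 / 2) ^ T * ∑ f : Fin T → halfCoin.support, CAL (empDist T fun t => f t) := by
  rw [expectedCAL, mul_sum]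
  refine sum_congr rfl fun f _ => ?_
  simp [halfCoin_apply_of_mem (f _).2]

end HalfCoin

/-- any nonnegative calibration measure `CAL_T` that is (1) actionable —
for every bounded-utility decision task and every `α ≥ 0` there is a randomized
response (independent of the distribution) achieving swap regret `≤ α` on every
distribution with `CAL_T ≤ α` — and (2) `ε(T)`-testable on calibrated distributions —
the expected value of `CAL_T` on the empirical distribution of `T` i.i.d. samples from
any calibrated distribution is at most `ε(T)` — must have `ε(T) ≥ c·T^{-1/2}`. -/
theorem testable_actionable_lower_bound :
    ∃ c : ℝ, 0 < c ∧
      ∀ (T : ℕ), 0 < T → ∀ (CAL : ((ℝ × ℝ) →₀ ℝ) → ℝ) (ε : ℝ),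
        (∀ D, IsDist D → 0 ≤ CAL D) →
        (∀ (n : ℕ) (U : Fin n → ℝ → ℝ),
          (∀ a y, (y = 0 ∨ y = 1) → U a y ∈ Set.Icc (0:ℝ) 1) →
          ∀ α : ℝ, 0 ≤ α → ∃ r : ℝ → Fin n → ℝ,
            (∀ p a, 0 ≤ r p a) ∧ (∀ p, ∑ a : Fin n, r p a = 1) ∧
            ∀ D, IsDist D → CAL D ≤ α → SRD n U r D ≤ α) →
        (∀ D, IsDist D → CalibratedD D → expectedCAL T CAL D ≤ ε) →
        c / Real.sqrt T ≤ ε := by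
  refine ⟨3 / 256, by norm_num, fun T hT CAL ε hCAL hact htest => ?_⟩
  obtain ⟨r, -, hr1, hr⟩ := hact 2 guessUtility guessUtility_mem (1 / (8 * √T)) (by positivity)
  obtain ⟨a, ha⟩ := exists_half_le_add_one (hr1 (1 / 2))
  set tail : Finset (Fin T → halfCoin.support) :=
    {f | √T ≤ 2 * signSum (fun z => guessGain a z.1.2) f}
  have hCAL_tail (f) (hf : f ∈ tail) : 1 / (8 * √T) ≤ CAL (empDist T fun t => f t) := by
    by_contra! h
    have hlower := inv_four_sqrt_le_SRD_empDist hT _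
      (fun t => (mem_support_halfCoin.1 (f t).2).1) r a ha (mem_filter.1 hf).2
    have hupper := hr _ (isDist_empDist_of_isDist hT isDist_halfCoin f) h.le
    have : 0 < √T := by positivity
    have : 1 / (8 * √T) < 1 / (4 * √T) := by gcongr; norm_num
    linarith
  calc 3 / 256 / √T = 3 / 32 * (1 / (8 * √T)) := by ring
    _ ≤ (1 / 2) ^ T * #tail * (1 / (8 * √T)) := by
        gcongr
        exact three_div_le_card_signSum_guessGain_ge hT a
    _ ≤ (1 / 2) ^ T * ∑ f ∈ tail, CAL (empDist T fun t => f t) := by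
        rw [mul_assoc, ← nsmul_eq_mul]
        gcongr
        exact card_nsmul_le_sum _ _ _ hCAL_tail
    _ ≤ (1 / 2) ^ T * ∑ f : Fin T → halfCoin.support, CAL (empDist T fun t => f t) := by
        gcongr
        · exact fun f _ _ => hCAL _ (isDist_empDist_of_isDist hT isDist_halfCoin f)
        · exact subset_univ _
    _ = expectedCAL T CAL halfCoin := (expectedCAL_halfCoin T CAL).symm
    _ ≤ ε := htest _ isDist_halfCoin calibratedD_halfCoin
end
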